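/- arXiv:2505.08339 — 5 statements merged into one kernel-verified Lean document; each statement's English description precedes it below -/
import Mathlib

section
/- Let f ∈ C([0,ξ]) and define g : [−ξ,ξ] → ℝ by g(t) = f(ξ+t) for −ξ ≤ t ≤ 0 and g(t) = f(ξ−t) for 0 ≤ t ≤ ξ. Suppose r ∈ C¹([0,2ξ]) and f satisfies the BC-equation −r(0) f(t) + (1/2)∫₀^ξ [ r'(2ξ−t−s) + r'(|t−s|) ] f(s) ds = 1 for all t ∈ [0,ξ]. Then g satisfies the Krein equation −r(0) g(t) + (1/2)∫_{−ξ}^{ξ} r'(|t−s|) g(s) ds = 1 for all t ∈ [−ξ,ξ]. -/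
/-!
Extend `f` evenly about `t = ξ` and shift, so that the extension is `g s = f (ξ - |s|)`.
Folding `∫_{-ξ}^{ξ}` at `0` and substituting `u = ξ - s` turns the Krein integral at `t` into
an integral over `[0, ξ]` whose kernel is `k |t - s| + k |t + s|`.  For `s ≥ 0` the two numbers
`|t - s|, |t + s|` are, in some order, `|t| + s` and `|s - |t||`, which is the BC kernel at the
point `ξ - |t|`; and `g t = f (ξ - |t|)`.
-/

open MeasureTheory Set

theorem ContDiffOn.intervalIntegrable_deriv {E : Type*} [NormedAddCommGroup E] [NormedSpace ℝ E]
    {f : ℝ → E} {a b : ℝ} (hab : a < b) (hf : ContDiffOn ℝ 1 f (Icc a b)) :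
    IntervalIntegrable (deriv f) volume a b := by
  refine ((hf.continuousOn_derivWithin (uniqueDiffOn_Icc hab) le_rfl).intervalIntegrable_of_Icc
    hab.le).congr_uIoo fun x hx => ?_
  rw [uIoo_of_le hab.le] at hx
  exact derivWithin_of_mem_nhds (Icc_mem_nhds hx.1 hx.2)

theorem IntervalIntegrable.comp_abs {E : Type*} [NormedAddCommGroup E] {k : ℝ → E} {c : ℝ}
    (hc : 0 ≤ c) (hk : IntervalIntegrable k volume 0 c) :
    IntervalIntegrable (fun x => k |x|) volume (-c) c := by
  have hpos : IntervalIntegrable (fun x => k |x|) volume 0 c := by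
    refine hk.congr_uIoo fun x hx => ?_
    rw [uIoo_of_le hc] at hx
    simp only [abs_of_pos hx.1]
  have hneg : IntervalIntegrable (fun x => k |x|) volume (-c) 0 := by
    simpa only [abs_neg, neg_zero] using ((IntervalIntegrable.iff_comp_neg).mp hpos).symm
  exact hneg.trans hpos

theorem intervalIntegral.integral_symm_eq_integral_add_neg {E : Type*} [NormedAddCommGroup E]
    [NormedSpace ℝ E] {F : ℝ → E} {a : ℝ} (hF : IntervalIntegrable F volume (-a) a) :
    ∫ x in -a..a, F x = ∫ x in 0..a, (F x + F (-x)) := by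
  have hzero : (0 : ℝ) ∈ uIcc (-a) a := by
    rcases le_total 0 a with h | h <;> simp [h]
  have hleft : IntervalIntegrable F volume (-a) 0 := hF.mono_set (uIcc_subset_uIcc_left hzero)
  have hright : IntervalIntegrable F volume 0 a := hF.mono_set (uIcc_subset_uIcc_right hzero)
  have hleft' : IntervalIntegrable (fun x => F (-x)) volume 0 a := by
    simpa only [neg_neg, neg_zero] using ((IntervalIntegrable.iff_comp_neg).mp hleft).symm
  rw [intervalIntegral.integral_add hright hleft', intervalIntegral.integral_comp_neg, neg_zero,
    add_comm, intervalIntegral.integral_add_adjacent_intervals hleft hright]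

theorem comp_abs_sub_add_comp_abs_add {α : Type*} [AddCommMagma α] (k : ℝ → α) (t : ℝ) {s : ℝ}
    (hs : 0 ≤ s) : k |t - s| + k |t + s| = k (|t| + s) + k |(s - |t|)| := by
  rcases le_total 0 t with ht | ht
  · rw [abs_of_nonneg ht, abs_of_nonneg (by linarith : 0 ≤ t + s), abs_sub_comm, add_comm]
  · rw [abs_of_nonpos ht, abs_of_nonpos (by linarith : t - s ≤ 0), neg_sub, sub_neg_eq_add,
      neg_add_eq_sub, add_comm t]

theorem integral_abs_kernel_mul_even_extension {k f : ℝ → ℝ} {ξ t : ℝ}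
    (hk : IntervalIntegrable k volume 0 (2 * ξ)) (hf : ContinuousOn f (Icc 0 ξ)) (ht : |t| ≤ ξ) :
    ∫ s in -ξ..ξ, k |t - s| * f (ξ - |s|)
      = ∫ u in 0..ξ, (k (2 * ξ - (ξ - |t|) - u) + k |ξ - |t| - u|) * f u := by
  have hξ : 0 ≤ ξ := (abs_nonneg t).trans ht
  have hkernel : IntervalIntegrable (fun s => k |t - s|) volume (-ξ) ξ := by
    refine ((hk.comp_abs (by linarith)).comp_sub_left t).mono_set ?_
    rw [uIcc_of_le (by linarith), uIcc_of_ge (by linarith [abs_le.mp ht])]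
    exact Icc_subset_Icc (by linarith [abs_le.mp ht]) (by linarith [abs_le.mp ht])
  have hext : ContinuousOn (fun s => f (ξ - |s|)) (uIcc (-ξ) ξ) := by
    refine hf.comp (by fun_prop) fun s hs => ?_
    rw [uIcc_of_le (by linarith)] at hs
    exact ⟨by linarith [abs_le.mpr hs], by linarith [abs_nonneg s]⟩
  have hsubst := intervalIntegral.integral_comp_sub_left
    (fun u => (k (2 * ξ - (ξ - |t|) - u) + k |ξ - |t| - u|) * f u) (a := 0) (b := ξ) ξ
  rw [sub_self, sub_zero] at hsubst
  rw [intervalIntegral.integral_symm_eq_integral_add_neg (hkernel.mul_continuousOn hext), ← hsubst]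
  refine intervalIntegral.integral_congr fun s hs => ?_
  rw [uIcc_of_le hξ] at hs
  have hshift : 2 * ξ - (ξ - |t|) - (ξ - s) = |t| + s := by ring
  simp only [abs_neg, abs_of_nonneg hs.1, sub_neg_eq_add, sub_sub_sub_cancel_left, hshift]
  rw [← add_mul, comp_abs_sub_add_comp_abs_add k t hs.1]

/-- Reduction of the Neumann boundary-control equation (target `y = -1`)
to the classical M. Krein equation by even reflection and shift. -/
theorem krein_equation_from_bc_equation
    (ξ : ℝ) (hξ : 0 < ξ)
    (r : ℝ → ℝ) (hr : ContDiffOn ℝ 1 r (Icc 0 (2 * ξ)))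
    (f : ℝ → ℝ) (hf : ContinuousOn f (Icc 0 ξ))
    (heq : ∀ t ∈ Icc (0:ℝ) ξ,
      -r 0 * f t + (1 / 2) * ∫ s in Ioc 0 ξ,
        (deriv r (2 * ξ - t - s) + deriv r |t - s|) * f s = 1)
    (g : ℝ → ℝ)
    (hg : ∀ t ∈ Icc (-ξ) ξ, g t = if t ≤ 0 then f (ξ + t) else f (ξ - t)) :
    ∀ t ∈ Icc (-ξ) ξ,
      -r 0 * g t + (1 / 2) * ∫ s in Ioc (-ξ) ξ, deriv r |t - s| * g s = 1 := by
  have hg_even : ∀ s ∈ Icc (-ξ) ξ, g s = f (ξ - |s|) := fun s hs => by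
    rw [hg s hs]
    split_ifs with h
    · rw [abs_of_nonpos h, sub_neg_eq_add]
    · rw [abs_of_pos (not_le.mp h)]
  intro t ht
  have habs : |t| ≤ ξ := abs_le.mpr ht
  calc -r 0 * g t + (1 / 2) * ∫ s in Ioc (-ξ) ξ, deriv r |t - s| * g s
      = -r 0 * f (ξ - |t|) + (1 / 2) * ∫ s in -ξ..ξ, deriv r |t - s| * f (ξ - |s|) := by
        rw [hg_even t ht, intervalIntegral.integral_of_le (by linarith),
          setIntegral_congr_fun measurableSet_Ioc fun s hs => by
            rw [hg_even s (Ioc_subset_Icc_self hs)]]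
    _ = 1 := by
        rw [integral_abs_kernel_mul_even_extension (hr.intervalIntegrable_deriv (by linarith)) hf
          habs, intervalIntegral.integral_of_le hξ.le]
        exact heq _ ⟨by linarith, by linarith [abs_nonneg t]⟩
end

section
/- Let f ∈ C([0,ξ]) satisfy −r(0) f(t) + (1/2)∫₀^ξ [ r'(2ξ−t−s) + r'(|t−s|) ] f(s) ds = −∫_t^ξ r(s−t) ds for all t ∈ [0,ξ], with r ∈ C¹([0,2ξ]). Let g(t) be the even extension g(t) = f(ξ−|t|) on [−ξ,ξ]. Then g satisfies −r(0) g(t) + (1/2)∫_{−ξ}^{ξ} r'(|t−s|) g(s) ds = −∫₀^{|t|} r(s) ds for all t ∈ [−ξ,ξ]. -/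
/-!
Splitting `[-ξ, ξ]` at `0` and reflecting the left half, the kernel of the symmetric equation
becomes `r'(|t| + s) + r'(||t| - s|)` on `[0, ξ]`, whatever the sign of `t`. The substitution
`s ↦ ξ - s` turns it into the kernel `r'(2ξ - τ - s) + r'(|τ - s|)` of the Neumann equation at
`τ = ξ - |t|`, and translation by `τ` matches the right-hand sides.
-/

open MeasureTheory Set

theorem intervalIntegral.integral_neg_eq_integral_comp_neg_add {E : Type*} [NormedAddCommGroup E]
    [NormedSpace ℝ E] {f : ℝ → E} {a : ℝ} (hf : IntervalIntegrable f volume (-a) a) :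
    ∫ x in -a..a, f x = ∫ x in 0..a, (f (-x) + f x) := by
  have h0 : (0 : ℝ) ∈ uIcc (-a) a := by
    rcases le_total 0 a with h | h <;> simp [h]
  have hleft : IntervalIntegrable f volume (-a) 0 := hf.mono_set (uIcc_subset_uIcc_left h0)
  have hright : IntervalIntegrable f volume 0 a := hf.mono_set (uIcc_subset_uIcc_right h0)
  have hneg : IntervalIntegrable (fun x => f (-x)) volume 0 a := by
    simpa using ((IntervalIntegrable.iff_comp_neg (f := f)).mp hleft).symm
  rw [intervalIntegral.integral_add hneg hright, intervalIntegral.integral_comp_neg, neg_zero,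
    intervalIntegral.integral_add_adjacent_intervals hleft hright]

theorem setIntegral_Ioc_comp_sub_right {E : Type*} [NormedAddCommGroup E] [NormedSpace ℝ E]
    (f : ℝ → E) {a b : ℝ} (hab : a ≤ b) (d : ℝ) :
    ∫ x in Ioc a b, f (x - d) = ∫ x in Ioc (a - d) (b - d), f x := by
  rw [← intervalIntegral.integral_of_le hab, intervalIntegral.integral_comp_sub_right,
    intervalIntegral.integral_of_le (by linarith)]

theorem intervalIntegrable_deriv_comp_abs_sub {r : ℝ → ℝ} {L : ℝ} (hL : 0 < L)
    (hr : ContDiffOn ℝ 1 r (Icc 0 L)) {t a b : ℝ} (hab : ∀ s ∈ uIcc a b, |t - s| ≤ L) :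
    IntervalIntegrable (fun s => deriv r |t - s|) volume a b := by
  -- `deriv r` agrees with the continuous `derivWithin r (Icc 0 L)` unless `|t - s| ∈ {0, L}`.
  have hD : ContinuousOn (derivWithin r (Icc 0 L)) (Icc 0 L) :=
    hr.continuousOn_derivWithin (uniqueDiffOn_Icc hL) le_rfl
  have hcont : IntervalIntegrable (fun s => derivWithin r (Icc 0 L) |t - s|) volume a b :=
    (hD.comp (by fun_prop) fun s hs => ⟨abs_nonneg _, hab s hs⟩).intervalIntegrable
  have hnull : ∀ᵐ s, s ∉ ({t, t - L, t + L} : Set ℝ) := (toFinite _).countable.ae_notMem volume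
  refine hcont.congr_ae ?_
  filter_upwards [ae_restrict_mem measurableSet_uIoc, ae_restrict_of_ae hnull] with s hs hne
  simp only [mem_insert_iff, mem_singleton_iff, not_or] at hne
  have hpos : 0 < |t - s| := abs_pos.mpr (sub_ne_zero.mpr (Ne.symm hne.1))
  have hlt : |t - s| < L := by
    refine lt_of_le_of_ne (hab s (uIoc_subset_uIcc hs)) fun h => ?_
    rcases (abs_eq hL.le).mp h with h | h
    · exact hne.2.1 (by linarith)
    · exact hne.2.2 (by linarith)
  exact derivWithin_of_mem_nhds (Icc_mem_nhds hpos hlt)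

theorem comp_abs_add_add_comp_abs_sub {M : Type*} [AddCommMagma M] (φ : ℝ → M) (t : ℝ) {s : ℝ}
    (hs : 0 ≤ s) : φ |t + s| + φ |t - s| = φ (|t| + s) + φ |(|t|) - s| := by
  rcases le_total 0 t with h | h
  · rw [abs_of_nonneg h, abs_of_nonneg (by linarith : 0 ≤ t + s)]
  · rw [abs_of_nonpos h, abs_of_nonpos (by linarith : t - s ≤ 0), add_comm,
      show -(t - s) = -t + s by ring, show -t - s = -(t + s) by ring, abs_neg]

theorem integral_deriv_abs_sub_mul_even_extension {ξ : ℝ} (hξ : 0 < ξ) {r f : ℝ → ℝ}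
    (hr : ContDiffOn ℝ 1 r (Icc 0 (2 * ξ))) (hf : ContinuousOn f (Icc 0 ξ)) {t : ℝ}
    (ht : t ∈ Icc (-ξ) ξ) :
    ∫ s in Ioc (-ξ) ξ, deriv r |t - s| * f (ξ - |s|)
      = ∫ s in Ioc 0 ξ, (deriv r (2 * ξ - (ξ - |t|) - s) + deriv r |ξ - |t| - s|) * f s := by
  have hint : IntervalIntegrable (fun s => deriv r |t - s| * f (ξ - |s|)) volume (-ξ) ξ := by
    refine (intervalIntegrable_deriv_comp_abs_sub (by linarith) hr fun s hs => ?_).mul_continuousOn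
      (hf.comp (by fun_prop) fun s hs => ?_)
    · rw [uIcc_of_le (by linarith)] at hs
      exact abs_le.mpr ⟨by linarith [hs.2, ht.1], by linarith [hs.1, ht.2]⟩
    · rw [uIcc_of_le (by linarith)] at hs
      exact ⟨by linarith [abs_le.mpr hs], by linarith [abs_nonneg s]⟩
  calc ∫ s in Ioc (-ξ) ξ, deriv r |t - s| * f (ξ - |s|)
      = ∫ s in (-ξ)..ξ, deriv r |t - s| * f (ξ - |s|) :=
        (intervalIntegral.integral_of_le (by linarith)).symm
    _ = ∫ s in 0..ξ, (deriv r (|t| + s) + deriv r |(|t|) - s|) * f (ξ - s) := by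
        rw [intervalIntegral.integral_neg_eq_integral_comp_neg_add hint]
        refine intervalIntegral.integral_congr fun s hs => ?_
        have hs0 : 0 ≤ s := by rw [uIcc_of_le hξ.le] at hs; exact hs.1
        simp only [sub_neg_eq_add, abs_neg, abs_of_nonneg hs0, ← add_mul,
          comp_abs_add_add_comp_abs_sub (deriv r) t hs0]
    _ = ∫ s in 0..ξ,
          (deriv r (|t| + (ξ - s)) + deriv r |(|t|) - (ξ - s)|) * f (ξ - (ξ - s)) := by
        rw [intervalIntegral.integral_comp_sub_left
          (fun s => (deriv r (|t| + s) + deriv r |(|t|) - s|) * f (ξ - s)), sub_self, sub_zero]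
    _ = _ := by
        rw [intervalIntegral.integral_of_le hξ.le]
        refine setIntegral_congr_fun measurableSet_Ioc fun s _ => ?_
        rw [abs_sub_comm, sub_sub_cancel, sub_right_comm,
          show |t| + (ξ - s) = 2 * ξ - (ξ - |t|) - s by ring]

/-- Reduction step toward the Pariiskii equation: even reflection of the
BC-equation of the Neumann system with target `y(x) = -x`. -/
theorem pariiskii_reduction
    (ξ : ℝ) (hξ : 0 < ξ)
    (r : ℝ → ℝ) (hr : ContDiffOn ℝ 1 r (Icc 0 (2 * ξ)))
    (f : ℝ → ℝ) (hf : ContinuousOn f (Icc 0 ξ))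
    (heq : ∀ t ∈ Icc (0:ℝ) ξ,
      -r 0 * f t + (1 / 2) * ∫ s in Ioc 0 ξ,
        (deriv r (2 * ξ - t - s) + deriv r |t - s|) * f s
        = -∫ s in Ioc t ξ, r (s - t))
    (g : ℝ → ℝ)
    (hg : ∀ t ∈ Icc (-ξ) ξ, g t = f (ξ - |t|)) :
    ∀ t ∈ Icc (-ξ) ξ,
      -r 0 * g t + (1 / 2) * ∫ s in Ioc (-ξ) ξ, deriv r |t - s| * g s
        = -∫ s in Ioc 0 |t|, r s := by
  intro t ht
  have hτ : ξ - |t| ∈ Icc 0 ξ := ⟨by linarith [abs_le.mpr ht], by linarith [abs_nonneg t]⟩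
  have hgf : ∫ s in Ioc (-ξ) ξ, deriv r |t - s| * g s
      = ∫ s in Ioc (-ξ) ξ, deriv r |t - s| * f (ξ - |s|) :=
    setIntegral_congr_fun measurableSet_Ioc fun s hs => by rw [hg s (Ioc_subset_Icc_self hs)]
  have hτeq := heq _ hτ
  rw [setIntegral_Ioc_comp_sub_right _ hτ.2, sub_self, sub_sub_cancel] at hτeq
  rw [hg t ht, hgf, integral_deriv_abs_sub_mul_even_extension hξ hr hf ht, hτeq]
end

section
/- Suppose for each ξ ∈ (0,T] the function f(ξ,·) ∈ C¹ (jointly C¹ in (ξ,t)) satisfies f(ξ,t) + ∫₀^ξ [ p(t+s) − p(|t−s|) ] f(ξ,s) ds = t for 0 ≤ t ≤ ξ, where p ∈ C¹([0,2T]). Assume f(ξ,ξ) ≠ 0 and set L(ξ,t) := f(ξ,ξ)^{-1} ∂_ξ f(ξ,t) and F(s,t) := p(t+s) − p(|t−s|). Then the Gelfand–Levitan equation holds: F(ξ,t) + L(ξ,t) + ∫₀^ξ F(s,t) L(ξ,s) ds = 0 for 0 ≤ t ≤ ξ. -/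
open MeasureTheory Set

open Function

/-!
Differentiating `f(ξ,t) + ∫₀^ξ F(s,t) f(ξ,s) ds = t` in `ξ` by the Leibniz rule, the moving
endpoint contributes `F(ξ,t) f(ξ,ξ)`, so `∂_ξ f(ξ,t) + F(ξ,t) f(ξ,ξ) + ∫₀^ξ F(s,t) ∂_ξ f(ξ,s) ds = 0`;
dividing by `f(ξ,ξ)` gives the Gelfand–Levitan equation. Extending `p` continuously off
`[0, 2T]` makes the kernel continuous on the whole plane, where the Leibniz rule applies.
-/

section ParametricDeriv

variable {E : Type*} [NormedAddCommGroup E] [NormedSpace ℝ E]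

theorem ContDiff.hasDerivAt_uncurry_fst {f : ℝ → ℝ → E} (hf : ContDiff ℝ 1 (uncurry f))
    (ζ s : ℝ) : HasDerivAt (f · s) (fderiv ℝ (uncurry f) (ζ, s) (1, 0)) ζ :=
  ((hf.differentiable one_ne_zero (ζ, s)).hasFDerivAt.comp_hasDerivAt ζ
    ((hasDerivAt_id' ζ).prodMk (hasDerivAt_const ζ s)) :
      HasDerivAt (uncurry f ∘ fun z => (z, s)) _ ζ)

theorem ContDiff.continuous_deriv_fst {f : ℝ → ℝ → E} (hf : ContDiff ℝ 1 (uncurry f)) :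
    Continuous (uncurry fun ζ s => deriv (f · s) ζ) := by
  have : (uncurry fun ζ s => deriv (f · s) ζ) = fun q => fderiv ℝ (uncurry f) q (1, 0) :=
    funext fun q => (hf.hasDerivAt_uncurry_fst q.1 q.2).deriv
  rw [this]
  exact (hf.continuous_fderiv one_ne_zero).clm_apply continuous_const

theorem HasDerivAt.eq_zero_of_forall_Ioc_eq {φ : ℝ → E} {φ' c : E} {a ξ : ℝ}
    (h : HasDerivAt φ φ' ξ) (haξ : a < ξ) (hc : ∀ ζ ∈ Ioc a ξ, φ ζ = c) : φ' = 0 :=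
  (uniqueDiffOn_Ioc a ξ ξ ⟨haξ, le_rfl⟩).eq_deriv _ h.hasDerivWithinAt
    ((hasDerivWithinAt_const ξ _ c).congr hc (hc ξ ⟨haξ, le_rfl⟩))

theorem hasDerivAt_intervalIntegral_of_continuous_deriv {k k' : ℝ → ℝ → E}
    (hk : ∀ ζ, Continuous (k ζ)) (hk' : Continuous (uncurry k'))
    (hderiv : ∀ ζ s, HasDerivAt (k · s) (k' ζ s) ζ) (a b ξ : ℝ) :
    HasDerivAt (fun ζ => ∫ s in a..b, k ζ s) (∫ s in a..b, k' ξ s) ξ := by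
  obtain ⟨C, hC⟩ := (isCompact_Icc.prod isCompact_uIcc :
    IsCompact (Icc (ξ - 1) (ξ + 1) ×ˢ uIcc a b)).exists_bound_of_continuousOn hk'.continuousOn
  refine (intervalIntegral.hasDerivAt_integral_of_dominated_loc_of_deriv_le (bound := fun _ => C)
    (Icc_mem_nhds (sub_one_lt ξ) (lt_add_one ξ)) (.of_forall fun ζ => (hk ζ).aestronglyMeasurable)
    ((hk ξ).intervalIntegrable _ _) (hk'.comp (Continuous.prodMk_right ξ)).aestronglyMeasurable
    ?_ intervalIntegrable_const (.of_forall fun s _ ζ _ => hderiv ζ s)).2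
  exact .of_forall fun s hs ζ hζ => hC (ζ, s) ⟨hζ, uIoc_subset_uIcc hs⟩

variable [CompleteSpace E]

theorem hasDerivAt_intervalIntegral_diagonal {k : ℝ → ℝ → E} (hk : Continuous (uncurry k))
    (ξ : ℝ) : HasDerivAt (fun ζ => ∫ s in ξ..ζ, k ζ s) (k ξ ξ) ξ := by
  rw [hasDerivAt_iff_isLittleO, Asymptotics.isLittleO_iff]
  intro ε hε
  obtain ⟨δ, hδ, hk_near⟩ := Metric.continuousAt_iff.mp hk.continuousAt ε hε
  filter_upwards [Metric.ball_mem_nhds ξ hδ] with ζ hζ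
  have hsplit : (∫ s in ξ..ζ, k ζ s) - (∫ s in ξ..ξ, k ξ s) - (ζ - ξ) • k ξ ξ
      = ∫ s in ξ..ζ, (k ζ s - k ξ ξ) := by
    have hk_int : IntervalIntegrable (k ζ) volume ξ ζ :=
      (hk.comp (Continuous.prodMk_right ζ)).intervalIntegrable _ _
    rw [intervalIntegral.integral_sub hk_int intervalIntegrable_const,
      intervalIntegral.integral_const, intervalIntegral.integral_same, sub_zero]
  rw [hsplit, Real.norm_eq_abs]
  refine intervalIntegral.norm_integral_le_of_norm_le_const fun s hs => ?_
  have hs_near : dist (ζ, s) (ξ, ξ) < δ := by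
    rw [Prod.dist_eq, max_lt_iff, Real.dist_eq s]
    exact ⟨hζ, (abs_sub_left_of_mem_uIcc (uIoc_subset_uIcc hs)).trans_lt hζ⟩
  rw [← dist_eq_norm]
  exact (hk_near hs_near).le

theorem hasDerivAt_intervalIntegral_leibniz {k k' : ℝ → ℝ → E} (hk : Continuous (uncurry k))
    (hk' : Continuous (uncurry k')) (hderiv : ∀ ζ s, HasDerivAt (k · s) (k' ζ s) ζ) (a ξ : ℝ) :
    HasDerivAt (fun ζ => ∫ s in a..ζ, k ζ s) (k ξ ξ + ∫ s in a..ξ, k' ξ s) ξ := by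
  have hslice : ∀ ζ, Continuous (k ζ) := fun ζ => hk.comp (Continuous.prodMk_right ζ)
  have hsplit : (fun ζ => ∫ s in a..ζ, k ζ s)
      = fun ζ => (∫ s in a..ξ, k ζ s) + ∫ s in ξ..ζ, k ζ s := funext fun ζ =>
    (intervalIntegral.integral_add_adjacent_intervals ((hslice ζ).intervalIntegrable _ _)
      ((hslice ζ).intervalIntegrable _ _)).symm
  rw [hsplit, add_comm (k ξ ξ)]
  exact (hasDerivAt_intervalIntegral_of_continuous_deriv hslice hk' hderiv a ξ ξ).add
    (hasDerivAt_intervalIntegral_diagonal hk ξ)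

end ParametricDeriv

theorem ContinuousOn.exists_continuous_eqOn_Icc {p : ℝ → ℝ} {a b : ℝ} (hab : a ≤ b)
    (hp : ContinuousOn p (Icc a b)) : ∃ q : ℝ → ℝ, Continuous q ∧ EqOn p q (Icc a b) :=
  ⟨IccExtend hab ((Icc a b).domRestrict p), continuous_IccExtend_iff.2 hp.domRestrict,
    fun _ hx => by rw [IccExtend_of_mem hab _ hx]; rfl⟩

theorem exists_continuous_eq_sub_abs {p : ℝ → ℝ} {T : ℝ} (hT : 0 ≤ T)
    (hp : ContinuousOn p (Icc 0 (2 * T))) :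
    ∃ G : ℝ → ℝ → ℝ, Continuous (uncurry G) ∧
      ∀ s ∈ Icc 0 T, ∀ t ∈ Icc 0 T, G s t = p (t + s) - p |t - s| := by
  obtain ⟨q, hq, hpq⟩ := hp.exists_continuous_eqOn_Icc (by linarith)
  refine ⟨fun s t => q (t + s) - q |t - s|, by fun_prop, fun s hs t ht => ?_⟩
  rw [hpq ⟨by linarith [hs.1, ht.1], by linarith [hs.2, ht.2]⟩,
    hpq ⟨abs_nonneg _, abs_sub_le_iff.2 ⟨by linarith [hs.1, ht.2], by linarith [hs.2, ht.1]⟩⟩]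

theorem hasDerivAt_add_integral_kernel_mul {K : ℝ → ℝ} (hK : Continuous K) {f : ℝ → ℝ → ℝ}
    (hf : ContDiff ℝ 1 (uncurry f)) (a t ξ : ℝ) :
    HasDerivAt (fun ζ => f ζ t + ∫ s in a..ζ, K s * f ζ s)
      (deriv (f · t) ξ + (K ξ * f ξ ξ + ∫ s in a..ξ, K s * deriv (f · s) ξ)) ξ := by
  have hderiv : ∀ ζ s, HasDerivAt (f · s) (deriv (f · s) ζ) ζ := fun ζ s =>
    (hf.hasDerivAt_uncurry_fst ζ s).differentiableAt.hasDerivAt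
  exact (hderiv ξ t).add (hasDerivAt_intervalIntegral_leibniz
    (k := fun ζ s => K s * f ζ s) (k' := fun ζ s => K s * deriv (f · s) ζ)
    ((hK.comp continuous_snd).mul hf.continuous)
    ((hK.comp continuous_snd).mul hf.continuous_deriv_fst)
    (fun ζ s => (hderiv ζ s).const_mul (K s)) a ξ)

theorem deriv_add_integral_kernel_mul_eq_zero {K : ℝ → ℝ → ℝ} (hK : Continuous (uncurry K))
    {f : ℝ → ℝ → ℝ} (hf : ContDiff ℝ 1 (uncurry f)) {g : ℝ → ℝ} {T : ℝ}
    (h : ∀ ξ ∈ Ioc 0 T, ∀ t ∈ Icc 0 ξ, f ξ t + ∫ s in 0..ξ, K s t * f ξ s = g t) :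
    ∀ ξ ∈ Ioc 0 T, ∀ t ∈ Icc 0 ξ,
      deriv (f · t) ξ + (K ξ t * f ξ ξ + ∫ s in 0..ξ, K s t * deriv (f · s) ξ) = 0 := by
  intro ξ hξ
  have hcont : Continuous fun t =>
      deriv (f · t) ξ + (K ξ t * f ξ ξ + ∫ s in 0..ξ, K s t * deriv (f · s) ξ) :=
    (hf.continuous_deriv_fst.comp (.prodMk_right ξ)).add
      (((hK.comp (.prodMk_right ξ)).mul continuous_const).add
        (intervalIntegral.continuous_parametric_intervalIntegral_of_continuous'
          ((hK.comp continuous_swap).mul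
            (hf.continuous_deriv_fst.comp (continuous_const.prodMk continuous_snd))) 0 ξ))
  refine EqOn.of_subset_closure (s := Ico 0 ξ) (fun t ht => ?_) hcont.continuousOn
    continuousOn_const Ico_subset_Icc_self (closure_Ico hξ.1.ne).ge
  -- for `t < ξ` the equation holds on the nondegenerate interval `ζ ∈ (t, ξ]`; `t = ξ` is a limit
  refine (hasDerivAt_add_integral_kernel_mul (K := (K · t)) (hK.comp (.prodMk_left t)) hf 0 t
    ξ).eq_zero_of_forall_Ioc_eq (c := g t) ht.2 fun ζ hζ => ?_
  exact h ζ ⟨ht.1.trans_lt hζ.1, hζ.2.trans hξ.2⟩ t ⟨ht.1, hζ.1.le⟩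

/-- Derivation of the Gelfand–Levitan equation from the family of
boundary-control equations `f(ξ,t) + ∫₀^ξ [p(t+s) - p(|t-s|)] f(ξ,s) ds = t`. -/
theorem gelfand_levitan_equation
    (T : ℝ) (hT : 0 < T)
    (p : ℝ → ℝ) (hp : ContDiffOn ℝ 1 p (Icc 0 (2 * T)))
    (f : ℝ → ℝ → ℝ)
    (hfC1 : ContDiff ℝ 1 (fun q : ℝ × ℝ => f q.1 q.2))
    (heq : ∀ ξ ∈ Ioc (0:ℝ) T, ∀ t ∈ Icc (0:ℝ) ξ,
      f ξ t + ∫ s in Ioc 0 ξ, (p (t + s) - p |t - s|) * f ξ s = t)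
    (hne : ∀ ξ ∈ Ioc (0:ℝ) T, f ξ ξ ≠ 0)
    (L : ℝ → ℝ → ℝ)
    (hL : ∀ ξ t, L ξ t = (f ξ ξ)⁻¹ * deriv (fun ζ => f ζ t) ξ)
    (F : ℝ → ℝ → ℝ)
    (hF : ∀ s t, F s t = p (t + s) - p |t - s|) :
    ∀ ξ ∈ Ioc (0:ℝ) T, ∀ t ∈ Icc (0:ℝ) ξ,
      F ξ t + L ξ t + ∫ s in Ioc 0 ξ, F s t * L ξ s = 0 := by
  obtain ⟨G, hG, hGF⟩ := exists_continuous_eq_sub_abs hT.le hp.continuousOn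
  simp_rw [← hF] at hGF heq
  have hFG_integral : ∀ ξ ∈ Ioc (0:ℝ) T, ∀ t ∈ Icc (0:ℝ) T, ∀ g : ℝ → ℝ,
      ∫ s in Ioc 0 ξ, F s t * g s = ∫ s in 0..ξ, G s t * g s := fun ξ hξ t ht g => by
    rw [intervalIntegral.integral_of_le hξ.1.le]
    exact setIntegral_congr_fun measurableSet_Ioc fun s hs => by
      rw [hGF s ⟨hs.1.le, hs.2.trans hξ.2⟩ t ht]
  have hderiv := deriv_add_integral_kernel_mul_eq_zero hG hfC1 (g := id) fun ξ hξ t ht => by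
    rw [← hFG_integral ξ hξ t ⟨ht.1, ht.2.trans hξ.2⟩]
    exact heq ξ hξ t ht
  intro ξ hξ t ht
  have htT : t ∈ Icc (0:ℝ) T := ⟨ht.1, ht.2.trans hξ.2⟩
  rw [hFG_integral ξ hξ t htT, ← hGF ξ ⟨hξ.1.le, hξ.2⟩ t htT]
  simp_rw [hL, mul_left_comm (G _ t), intervalIntegral.integral_const_mul]
  have hfξ := hne ξ hξ
  field_simp
  linear_combination hderiv ξ hξ t ht
end

section
/- Suppose for each ξ ≥ 0 the function f(ξ,·) (jointly C¹ in (ξ,τ) for τ ≥ ξ, decaying suitably at infinity) satisfies f(ξ,τ) + ∫_ξ^∞ r(τ+s) f(ξ,s) ds = e^{−kτ} for τ ≥ ξ, where r is smooth and compactly supported on [0,∞) and k > 0. Assume f(ξ,ξ) ≠ 0 and set g(ξ,τ) := f(ξ,ξ)^{-1} ∂_ξ f(ξ,τ). Then g satisfies the Marchenko equation g(ξ,τ) + ∫_ξ^∞ r(τ+s) g(ξ,s) ds = r(τ+ξ) for τ ≥ ξ. -/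
open MeasureTheory Set Filter Topology Asymptotics

/-- The partial derivative of `f` in the first variable. -/
noncomputable def mD (f : ℝ → ℝ → ℝ) (ξ τ : ℝ) : ℝ :=
  fderiv ℝ (fun q : ℝ × ℝ => f q.1 q.2) (ξ, τ) (1, 0)

lemma mD_hasDerivAt (f : ℝ → ℝ → ℝ)
    (hfC1 : ContDiff ℝ 1 (fun q : ℝ × ℝ => f q.1 q.2)) (ξ τ : ℝ) :
    HasDerivAt (fun ζ => f ζ τ) (mD f ξ τ) ξ := by
  have h := (hfC1.differentiable one_ne_zero (ξ, τ)).hasFDerivAt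
  have hline : HasDerivAt (fun ζ : ℝ => ((ζ, τ) : ℝ × ℝ)) (1, 0) ξ :=
    (hasDerivAt_id ξ).prodMk (hasDerivAt_const ξ τ)
  have := h.comp_hasDerivAt ξ hline
  simpa [mD, Function.comp_def] using this

lemma mD_deriv (f : ℝ → ℝ → ℝ)
    (hfC1 : ContDiff ℝ 1 (fun q : ℝ × ℝ => f q.1 q.2)) (ξ τ : ℝ) :
    deriv (fun ζ => f ζ τ) ξ = mD f ξ τ :=
  (mD_hasDerivAt f hfC1 ξ τ).deriv

lemma mD_cont (f : ℝ → ℝ → ℝ)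
    (hfC1 : ContDiff ℝ 1 (fun q : ℝ × ℝ => f q.1 q.2)) :
    Continuous fun q : ℝ × ℝ => mD f q.1 q.2 := by
  have h := hfC1.continuous_fderiv one_ne_zero
  have : Continuous fun q : ℝ × ℝ =>
      (fderiv ℝ (fun q : ℝ × ℝ => f q.1 q.2) q) ((1 : ℝ), (0 : ℝ)) :=
    h.clm_apply continuous_const
  simpa [mD] using this

lemma marchenko_key
    (k : ℝ)
    (r : ℝ → ℝ) (hrc : Continuous r) (hrsupp : HasCompactSupport r)
    (f : ℝ → ℝ → ℝ)
    (hfC1 : ContDiff ℝ 1 (fun q : ℝ × ℝ => f q.1 q.2))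
    (hfint : ∀ ξ τ : ℝ, IntegrableOn (fun s => r (τ + s) * f ξ s) (Ioi ξ))
    (heq : ∀ ξ : ℝ, 0 ≤ ξ → ∀ τ : ℝ, ξ ≤ τ →
      f ξ τ + ∫ s in Ioi ξ, r (τ + s) * f ξ s = Real.exp (-k * τ)) :
    ∀ ξ₀ : ℝ, 0 ≤ ξ₀ → ∀ τ : ℝ, ξ₀ < τ →
      mD f ξ₀ τ + ∫ s in Ioi ξ₀, r (τ + s) * mD f ξ₀ s = r (τ + ξ₀) * f ξ₀ ξ₀ := by
  intro ξ₀ hξ₀ τ hτ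
  have hfc : Continuous fun q : ℝ × ℝ => f q.1 q.2 := hfC1.continuous
  have hDc : Continuous fun q : ℝ × ℝ => mD f q.1 q.2 := mD_cont f hfC1
  have hcont_fs : ∀ x : ℝ, Continuous fun s => f x s := fun x =>
    hfc.comp (continuous_const.prodMk continuous_id)
  have hcont_Ds : ∀ x : ℝ, Continuous fun s => mD f x s := fun x =>
    hDc.comp (continuous_const.prodMk continuous_id)
  have hcont_rτ : Continuous fun s : ℝ => r (τ + s) :=
    hrc.comp (continuous_const.add continuous_id)
  obtain ⟨Mr, hMr⟩ := hrc.bounded_above_of_compact_support hrsupp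
  have hMr0 : 0 ≤ Mr := le_trans (norm_nonneg _) (hMr 0)
  obtain ⟨A0, hA0⟩ := hrsupp.isBounded.subset_closedBall 0
  set A : ℝ := max A0 ξ₀ + 1 with hA
  have hξ₀A : ξ₀ < A := lt_of_le_of_lt (le_max_right _ _) (lt_add_one _)
  have hrA : ∀ s : ℝ, A < s → r (τ + s) = 0 := by
    intro s hs
    apply image_eq_zero_of_notMem_tsupport
    intro hmem
    have h1 : ‖τ + s - 0‖ ≤ A0 := by
      simpa [Metric.mem_closedBall, dist_eq_norm] using hA0 hmem
    have h2 : |τ + s| ≤ A0 := by simpa using h1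
    have h3 : A0 ≤ A - 1 := by
      simp only [hA]; simp [le_max_left]
    have := (abs_le.mp h2).2
    linarith [hτ, hξ₀]
  -- derivative of ξ ↦ ∫_{Ioi ξ₀} r(τ+s) f ξ s ds
  obtain ⟨C, hC⟩ := ((isCompact_Icc.prod isCompact_Icc) :
      IsCompact (Icc (ξ₀ - 1) (ξ₀ + 1) ×ˢ Icc ξ₀ A)).exists_bound_of_continuousOn
    (f := fun q : ℝ × ℝ => r (τ + q.2) * mD f q.1 q.2)
    (((hrc.comp (continuous_const.add continuous_snd)).mul hDc).continuousOn)
  have hG : HasDerivAt (fun ξ => ∫ s in Ioi ξ₀, r (τ + s) * f ξ s)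
      (∫ s in Ioi ξ₀, r (τ + s) * mD f ξ₀ s) ξ₀ := by
    have := hasDerivAt_integral_of_dominated_loc_of_deriv_le
      (μ := volume.restrict (Ioi ξ₀)) (x₀ := ξ₀)
      (F := fun ξ s => r (τ + s) * f ξ s)
      (F' := fun ξ s => r (τ + s) * mD f ξ s)
      (bound := (Ioc ξ₀ A).indicator fun _ => C) (Metric.ball_mem_nhds ξ₀ one_pos)
      (Eventually.of_forall fun x =>
        (hcont_rτ.mul (hcont_fs x)).aestronglyMeasurable)
      (hfint ξ₀ τ)
      ((hcont_rτ.mul (hcont_Ds ξ₀)).aestronglyMeasurable)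
      ?_ ?_ ?_
    · exact this.2
    · rw [ae_restrict_iff' measurableSet_Ioi]
      refine Eventually.of_forall fun s hs => fun x hx => ?_
      show ‖r (τ + s) * mD f x s‖ ≤ (Ioc ξ₀ A).indicator (fun _ => C) s
      by_cases hsA : s ≤ A
      · rw [indicator_of_mem (show s ∈ Ioc ξ₀ A from ⟨hs, hsA⟩)]
        have hx' : x ∈ Icc (ξ₀ - 1) (ξ₀ + 1) := by
          have := abs_sub_lt_iff.mp (by simpa [Real.dist_eq] using hx)
          constructor <;> linarith [this.1, this.2]
        exact hC (x, s) ⟨hx', le_of_lt hs, hsA⟩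
      · rw [indicator_of_notMem (fun hmem => hsA hmem.2), hrA s (lt_of_not_ge hsA),
          zero_mul]
        simp
    · have h1 : IntegrableOn (fun _ : ℝ => C) (Ioc ξ₀ A) volume :=
        integrableOn_const measure_Ioc_lt_top.ne
      exact (h1.integrable_indicator measurableSet_Ioc).integrableOn
    · refine Eventually.of_forall fun s => fun x hx => ?_
      exact (mD_hasDerivAt f hfC1 x s).const_mul (r (τ + s))
  -- derivative of ξ ↦ ∫_{ξ₀}^ξ r(τ+s) f ξ₀ s ds
  set φ : ℝ → ℝ := fun s => r (τ + s) * f ξ₀ s with hφ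
  have hφc : Continuous φ := hcont_rτ.mul (hcont_fs ξ₀)
  have hH1 : HasDerivAt (fun ξ => ∫ s in ξ₀..ξ, φ s) (φ ξ₀) ξ₀ :=
    intervalIntegral.integral_hasDerivAt_right (hφc.intervalIntegrable _ _)
      hφc.stronglyMeasurable.stronglyMeasurableAtFilter hφc.continuousAt
  -- the remainder term has vanishing one-sided derivative
  set H2 : ℝ → ℝ := fun ξ => ∫ s in ξ₀..ξ, r (τ + s) * (f ξ s - f ξ₀ s) with hH2def
  obtain ⟨L, hL⟩ := (isCompact_closedBall ((ξ₀, ξ₀) : ℝ × ℝ) 1).exists_bound_of_continuousOn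
    ((hfC1.continuous_fderiv one_ne_zero).continuousOn)
  have hlip : ∀ p q : ℝ × ℝ, p ∈ Metric.closedBall ((ξ₀, ξ₀) : ℝ × ℝ) 1 →
      q ∈ Metric.closedBall ((ξ₀, ξ₀) : ℝ × ℝ) 1 →
      ‖f q.1 q.2 - f p.1 p.2‖ ≤ L * ‖q - p‖ := fun p q hp hq =>
    Convex.norm_image_sub_le_of_norm_fderiv_le
      (fun z _ => hfC1.differentiable one_ne_zero z) hL (convex_closedBall _ _) hp hq
  have hH2 : HasDerivWithinAt H2 0 (Icc ξ₀ τ) ξ₀ := by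
    rw [hasDerivWithinAt_iff_isLittleO]
    have hz : H2 ξ₀ = 0 := by simp [hH2def]
    simp only [hz, sub_zero, smul_zero]
    have h1 : (fun ξ => H2 ξ) =O[𝓝[Icc ξ₀ τ] ξ₀] fun ξ => (ξ - ξ₀) ^ 2 := by
      rw [isBigO_iff]
      refine ⟨Mr * L, ?_⟩
      have hev1 : ∀ᶠ ξ in 𝓝[Icc ξ₀ τ] ξ₀, ξ ∈ Icc (ξ₀ - 1) (ξ₀ + 1) :=
        nhdsWithin_le_nhds (Icc_mem_nhds (by linarith) (by linarith))
      filter_upwards [hev1, self_mem_nhdsWithin] with ξ hξ1 hξ2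
      have hle : ξ₀ ≤ ξ := hξ2.1
      have hd1 : |ξ - ξ₀| ≤ 1 := abs_sub_le_iff.mpr ⟨by linarith [hξ1.2], by linarith [hξ1.1]⟩
      have hbd : ∀ s ∈ Set.uIoc ξ₀ ξ, ‖r (τ + s) * (f ξ s - f ξ₀ s)‖ ≤ Mr * (L * (ξ - ξ₀)) := by
        intro s hs
        rw [uIoc_of_le hle] at hs
        have hs1 : ξ₀ < s := hs.1
        have hs2 : s ≤ ξ := hs.2
        have hle1 : ξ - ξ₀ ≤ 1 := le_trans (le_abs_self _) hd1
        have hmem1 : ((ξ₀, s) : ℝ × ℝ) ∈ Metric.closedBall ((ξ₀, ξ₀) : ℝ × ℝ) 1 := by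
          rw [Metric.mem_closedBall, Prod.dist_eq]
          refine max_le (by rw [dist_self]; norm_num) ?_
          rw [Real.dist_eq, abs_of_nonneg (by linarith)]
          linarith
        have hmem2 : ((ξ, s) : ℝ × ℝ) ∈ Metric.closedBall ((ξ₀, ξ₀) : ℝ × ℝ) 1 := by
          rw [Metric.mem_closedBall, Prod.dist_eq]
          refine max_le (by rw [Real.dist_eq]; exact hd1) ?_
          rw [Real.dist_eq, abs_of_nonneg (by linarith)]
          linarith
        have hfd : ‖f ξ s - f ξ₀ s‖ ≤ L * (ξ - ξ₀) := by
          have := hlip (ξ₀, s) (ξ, s) hmem1 hmem2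
          have hnorm : ‖((ξ, s) : ℝ × ℝ) - (ξ₀, s)‖ = ξ - ξ₀ := by
            have h0 : ((ξ, s) : ℝ × ℝ) - (ξ₀, s) = (ξ - ξ₀, 0) := by
              simp [Prod.ext_iff]
            rw [h0, Prod.norm_def]
            simp only [norm_zero, Real.norm_eq_abs]
            rw [max_eq_left (abs_nonneg _), abs_of_nonneg (by linarith : (0:ℝ) ≤ ξ - ξ₀)]
          rw [hnorm] at this
          exact this
        calc ‖r (τ + s) * (f ξ s - f ξ₀ s)‖ = ‖r (τ + s)‖ * ‖f ξ s - f ξ₀ s‖ := norm_mul _ _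
          _ ≤ Mr * (L * (ξ - ξ₀)) :=
            mul_le_mul (hMr _) hfd (norm_nonneg _) hMr0
      have := intervalIntegral.norm_integral_le_of_norm_le_const hbd
      calc ‖H2 ξ‖ ≤ Mr * (L * (ξ - ξ₀)) * |ξ - ξ₀| := this
        _ = Mr * L * ‖(ξ - ξ₀) ^ 2‖ := by
            rw [abs_of_nonneg (show (0:ℝ) ≤ ξ - ξ₀ by linarith)]
            rw [Real.norm_eq_abs, abs_of_nonneg (sq_nonneg _)]
            ring
    have h2 : (fun ξ : ℝ => (ξ - ξ₀) ^ 2) =o[𝓝[Icc ξ₀ τ] ξ₀] fun ξ => ξ - ξ₀ := by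
      have ht : Tendsto (fun ξ : ℝ => ξ - ξ₀) (𝓝[Icc ξ₀ τ] ξ₀) (𝓝 0) := by
        have h0 : Tendsto (fun ξ : ℝ => ξ - ξ₀) (𝓝 ξ₀) (𝓝 (ξ₀ - ξ₀)) :=
          (continuous_id.sub (continuous_const : Continuous fun _ : ℝ => ξ₀)).tendsto ξ₀
        rw [sub_self] at h0
        exact h0.mono_left nhdsWithin_le_nhds
      have hlo : (fun ξ : ℝ => ξ - ξ₀) =o[𝓝[Icc ξ₀ τ] ξ₀] fun _ => (1 : ℝ) :=
        (isLittleO_one_iff ℝ).mpr ht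
      have := hlo.mul_isBigO (isBigO_refl (fun ξ : ℝ => ξ - ξ₀) _)
      simpa [sq] using this
    exact h1.trans_isLittleO h2
  -- combine
  set Ft : ℝ → ℝ := fun ξ => f ξ τ +
    ((∫ s in Ioi ξ₀, r (τ + s) * f ξ s) - ((∫ s in ξ₀..ξ, φ s) + H2 ξ)) with hFtdef
  have hFt : HasDerivWithinAt Ft
      (mD f ξ₀ τ + ((∫ s in Ioi ξ₀, r (τ + s) * mD f ξ₀ s) - (φ ξ₀ + 0)))
      (Icc ξ₀ τ) ξ₀ :=
    ((mD_hasDerivAt f hfC1 ξ₀ τ).hasDerivWithinAt).add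
      ((hG.hasDerivWithinAt).sub ((hH1.hasDerivWithinAt).add hH2))
  have hconst : ∀ ξ ∈ Icc ξ₀ τ, Ft ξ = Real.exp (-k * τ) := by
    intro ξ hξ
    have hξ0 : 0 ≤ ξ := le_trans hξ₀ hξ.1
    have hcξ : Continuous fun s => r (τ + s) * f ξ s := hcont_rτ.mul (hcont_fs ξ)
    have hsplit : (∫ s in Ioi ξ₀, r (τ + s) * f ξ s) =
        (∫ s in Ioc ξ₀ ξ, r (τ + s) * f ξ s) + ∫ s in Ioi ξ, r (τ + s) * f ξ s := by
      rw [← setIntegral_union (Ioc_disjoint_Ioi le_rfl) measurableSet_Ioi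
        hcξ.integrableOn_Ioc (hfint ξ τ), Ioc_union_Ioi_eq_Ioi hξ.1]
    have hsum : (∫ s in ξ₀..ξ, φ s) + H2 ξ = ∫ s in Ioc ξ₀ ξ, r (τ + s) * f ξ s := by
      have : (∫ s in ξ₀..ξ, φ s) + H2 ξ =
          ∫ s in ξ₀..ξ, (φ s + r (τ + s) * (f ξ s - f ξ₀ s)) := by
        exact (intervalIntegral.integral_add (hφc.intervalIntegrable _ _)
          ((hcont_rτ.mul ((hcont_fs ξ).sub (hcont_fs ξ₀))).intervalIntegrable _ _)).symm
      rw [this, ← intervalIntegral.integral_of_le hξ.1]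
      congr 1
      funext s
      simp only [hφ]
      ring
    have hFtval : Ft ξ = f ξ τ + ∫ s in Ioi ξ, r (τ + s) * f ξ s := by
      simp only [hFtdef]
      rw [hsum, hsplit]
      ring
    rw [hFtval]
    exact heq ξ hξ0 τ hξ.2
  have hzero : HasDerivWithinAt Ft 0 (Icc ξ₀ τ) ξ₀ :=
    (hasDerivWithinAt_const ξ₀ (Icc ξ₀ τ) (Real.exp (-k * τ))).congr hconst
      (hconst ξ₀ ⟨le_rfl, hτ.le⟩)
  have huniq1 := hFt.derivWithin (uniqueDiffOn_Icc hτ ξ₀ ⟨le_rfl, hτ.le⟩)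
  have huniq2 := hzero.derivWithin (uniqueDiffOn_Icc hτ ξ₀ ⟨le_rfl, hτ.le⟩)
  have hfin : mD f ξ₀ τ + ((∫ s in Ioi ξ₀, r (τ + s) * mD f ξ₀ s) - (φ ξ₀ + 0)) = 0 := by
    rw [← huniq1, huniq2]
  have hφval : φ ξ₀ = r (τ + ξ₀) * f ξ₀ ξ₀ := rfl
  rw [hφval] at hfin
  linarith

/-- Derivation of the Marchenko equation from the family of control equations
`f(ξ,τ) + ∫_ξ^∞ r(τ+s) f(ξ,s) ds = e^{-kτ}` of the scattering system. -/
theorem marchenko_equation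
    (k : ℝ) (hk : 0 < k)
    (r : ℝ → ℝ) (hr : ContDiff ℝ (⊤ : ℕ∞) r) (hrsupp : HasCompactSupport r)
    (f : ℝ → ℝ → ℝ)
    (hfC1 : ContDiff ℝ 1 (fun q : ℝ × ℝ => f q.1 q.2))
    (hfint : ∀ ξ τ : ℝ, IntegrableOn (fun s => r (τ + s) * f ξ s) (Ioi ξ))
    (hfint' : ∀ ξ τ : ℝ,
      IntegrableOn (fun s => r (τ + s) * deriv (fun ζ => f ζ s) ξ) (Ioi ξ))
    (heq : ∀ ξ : ℝ, 0 ≤ ξ → ∀ τ : ℝ, ξ ≤ τ →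
      f ξ τ + ∫ s in Ioi ξ, r (τ + s) * f ξ s = Real.exp (-k * τ))
    (hne : ∀ ξ : ℝ, 0 ≤ ξ → f ξ ξ ≠ 0)
    (g : ℝ → ℝ → ℝ)
    (hg : ∀ ξ τ, g ξ τ = (f ξ ξ)⁻¹ * deriv (fun ζ => f ζ τ) ξ) :
    ∀ ξ : ℝ, 0 ≤ ξ → ∀ τ : ℝ, ξ ≤ τ →
      g ξ τ + ∫ s in Ioi ξ, r (τ + s) * g ξ s = r (τ + ξ) := by
  have hrc : Continuous r := hr.continuous
  have key := marchenko_key k r hrc hrsupp f hfC1 hfint heq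
  have hgD : ∀ ξ τ : ℝ, g ξ τ = (f ξ ξ)⁻¹ * mD f ξ τ := by
    intro ξ τ
    rw [hg, mD_deriv f hfC1]
  have hDc : Continuous fun q : ℝ × ℝ => mD f q.1 q.2 := mD_cont f hfC1
  -- the main case ξ < τ
  have main : ∀ ξ : ℝ, 0 ≤ ξ → ∀ τ : ℝ, ξ < τ →
      g ξ τ + ∫ s in Ioi ξ, r (τ + s) * g ξ s = r (τ + ξ) := by
    intro ξ hξ τ hlt
    have h := key ξ hξ τ hlt
    have hgint : (fun s => r (τ + s) * g ξ s) =
        fun s => (f ξ ξ)⁻¹ * (r (τ + s) * mD f ξ s) := by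
      funext s
      rw [hgD]
      ring
    rw [hgD, hgint, MeasureTheory.integral_const_mul]
    have hne' := hne ξ hξ
    field_simp
    linarith [mul_comm (r (τ + ξ)) (f ξ ξ) ▸ h]
  intro ξ hξ τ hτ
  rcases eq_or_lt_of_le hτ with rfl | hlt
  · -- corner case τ = ξ : pass to the limit τ' → ξ⁺
    have hgc : Continuous (g ξ) := by
      have hgeq : g ξ = fun τ' => (f ξ ξ)⁻¹ * mD f ξ τ' := funext fun τ' => hgD ξ τ'
      rw [hgeq]
      exact continuous_const.mul (hDc.comp (continuous_const.prodMk continuous_id))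
    obtain ⟨Mr, hMr⟩ := hrc.bounded_above_of_compact_support hrsupp
    obtain ⟨A0, hA0⟩ := hrsupp.isBounded.subset_closedBall 0
    set A : ℝ := max A0 ξ + 1 with hA
    have hrA : ∀ τ' : ℝ, ξ ≤ τ' → ∀ s : ℝ, A < s → r (τ' + s) = 0 := by
      intro τ' hτ' s hs
      apply image_eq_zero_of_notMem_tsupport
      intro hmem
      have h1 : ‖τ' + s - 0‖ ≤ A0 := by
        simpa [Metric.mem_closedBall, dist_eq_norm] using hA0 hmem
      have h2 : |τ' + s| ≤ A0 := by simpa using h1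
      have h3 : A0 ≤ A - 1 := by simp only [hA]; simp [le_max_left]
      have h4 : ξ ≤ A - 1 := by simp only [hA]; simp [le_max_right]
      have := (abs_le.mp h2).2
      linarith
    have T1 : Tendsto (fun τ' => g ξ τ') (𝓝[>] ξ) (𝓝 (g ξ ξ)) :=
      (hgc.tendsto ξ).mono_left nhdsWithin_le_nhds
    have T3 : Tendsto (fun τ' => r (τ' + ξ)) (𝓝[>] ξ) (𝓝 (r (ξ + ξ))) :=
      (((hrc.comp (continuous_id.add continuous_const)).tendsto ξ)).mono_left
        nhdsWithin_le_nhds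
    have T2 : Tendsto (fun τ' => ∫ s in Ioi ξ, r (τ' + s) * g ξ s) (𝓝[>] ξ)
        (𝓝 (∫ s in Ioi ξ, r (ξ + s) * g ξ s)) := by
      refine tendsto_integral_filter_of_dominated_convergence
        (bound := (Ioc ξ A).indicator fun s => Mr * |g ξ s|) ?_ ?_ ?_ ?_
      · refine Eventually.of_forall fun τ' => ?_
        exact ((hrc.comp (continuous_const.add continuous_id)).mul hgc).aestronglyMeasurable
      · filter_upwards [self_mem_nhdsWithin] with τ' hτ'
        rw [ae_restrict_iff' measurableSet_Ioi]
        refine Eventually.of_forall fun s hs => ?_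
        show ‖r (τ' + s) * g ξ s‖ ≤ (Ioc ξ A).indicator (fun s => Mr * |g ξ s|) s
        by_cases hsA : s ≤ A
        · rw [indicator_of_mem (show s ∈ Ioc ξ A from ⟨hs, hsA⟩)]
          rw [norm_mul, Real.norm_eq_abs (g ξ s)]
          exact mul_le_mul_of_nonneg_right (hMr _) (abs_nonneg _)
        · rw [indicator_of_notMem (fun hmem => hsA hmem.2),
            hrA τ' (le_of_lt hτ') s (lt_of_not_ge hsA), zero_mul]
          simp
      · have h1 : IntegrableOn (fun s => Mr * |g ξ s|) (Ioc ξ A) volume :=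
          (continuous_const.mul hgc.abs).integrableOn_Ioc
        exact (h1.integrable_indicator measurableSet_Ioc).integrableOn
      · refine Eventually.of_forall fun s => ?_
        have : Tendsto (fun τ' => r (τ' + s)) (𝓝[>] ξ) (𝓝 (r (ξ + s))) :=
          ((hrc.comp (continuous_id.add continuous_const)).tendsto ξ).mono_left
            nhdsWithin_le_nhds
        exact this.mul_const _
    have hLHS : Tendsto (fun τ' => r (τ' + ξ)) (𝓝[>] ξ)
        (𝓝 (g ξ ξ + ∫ s in Ioi ξ, r (ξ + s) * g ξ s)) := by
      refine (T1.add T2).congr' ?_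
      filter_upwards [self_mem_nhdsWithin] with τ' hτ'
      exact main ξ hξ τ' hτ'
    exact tendsto_nhds_unique hLHS T3
  · exact main ξ hξ τ hlt
end

section
/- Let b : { (s,t) ∈ ℝ² : s + t ≤ 0 } → ℝ be C² and satisfy b_tt = b_ss everywhere on its domain. Suppose lim_{t→−∞} b(t,t) = A, lim_{t→−∞} b(−t,t) = B, lim_{t→−∞} b(t,−t) = B, and lim_{s→−∞} b(s,0) = 0. Then b(0,0) = A + B. -/
/-!
On the open half-plane the wave equation and the symmetry of second derivatives give
`∂_{(a,-a)} ∂_{(a,a)} b = 0`, i.e. `b(s,t) = Φ(t+s) + Ψ(t-s)` locally. Hence `b` has the same sum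
over the two diagonals of every characteristic parallelogram, and by continuity this reaches the
boundary: `b(0,0) + b(2a,0) = b(a,a) + b(a,-a)` for `a < 0`. Letting `a → -∞` gives
`b(0,0) + 0 = A + B`.
-/

open Set Filter Topology

section

variable {E F : Type*} [NormedAddCommGroup E] [NormedSpace ℝ E]
  [NormedAddCommGroup F] [NormedSpace ℝ F]

theorem Convex.eq_of_hasFDerivAt_apply_eq_zero {U : Set E} (hU : Convex ℝ U) {G : E → F}
    {G' : E → E →L[ℝ] F} {x v : E} (hG : ∀ y ∈ U, HasFDerivAt G (G' y) y)
    (hv : ∀ y ∈ U, G' y v = 0) (hx : x ∈ U) (hxv : x + v ∈ U) : G (x + v) = G x := by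
  have hmem : ∀ τ ∈ Icc (0 : ℝ) 1, x + τ • v ∈ U := fun τ hτ => hU.add_smul_mem hx hxv hτ
  have hderiv : ∀ τ ∈ Icc (0 : ℝ) 1, HasDerivAt (fun τ : ℝ => G (x + τ • v)) 0 τ := by
    intro τ hτ
    have hline : HasDerivAt (fun τ : ℝ => x + τ • v) v τ := by
      simpa using ((hasDerivAt_id τ).smul_const v).const_add x
    have h := (hG _ (hmem τ hτ)).comp_hasDerivAt τ hline
    rwa [hv _ (hmem τ hτ)] at h
  simpa using constant_of_has_deriv_right_zero
    (fun τ hτ => (hderiv τ hτ).continuousAt.continuousWithinAt)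
    (fun τ hτ => (hderiv τ (Ico_subset_Icc_self hτ)).hasDerivWithinAt) 1
    (right_mem_Icc.2 zero_le_one)

theorem Convex.add_eq_add_of_fderiv_fderiv_apply_eq_zero {U : Set E} (hU : Convex ℝ U)
    (hUo : IsOpen U) {f : E → F} (hf : ContDiffOn ℝ 2 f U) {v w : E}
    (hvw : ∀ y ∈ U, fderiv ℝ (fderiv ℝ f) y w v = 0) {x : E} (hx : x ∈ U) (hxv : x + v ∈ U)
    (hxw : x + w ∈ U) (hxvw : x + v + w ∈ U) :
    f x + f (x + v + w) = f (x + v) + f (x + w) := by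
  have hf' : ∀ y ∈ U, HasFDerivAt f (fderiv ℝ f y) y := fun y hy =>
    ((hf.contDiffAt (hUo.mem_nhds hy)).differentiableAt two_ne_zero).hasFDerivAt
  have hf'' : ∀ y ∈ U, HasFDerivAt (fderiv ℝ f) (fderiv ℝ (fderiv ℝ f) y) y := fun y hy =>
    (((hf.fderiv_of_isOpen hUo (m := 1) le_rfl).contDiffAt (hUo.mem_nhds hy)).differentiableAt
      one_ne_zero).hasFDerivAt
  have hshift : ∀ y ∈ U, y + w ∈ U → fderiv ℝ f (y + w) v = fderiv ℝ f y v := fun y hy hyw =>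
    hU.eq_of_hasFDerivAt_apply_eq_zero
      (fun z hz => (ContinuousLinearMap.apply ℝ F v).hasFDerivAt.comp z (hf'' z hz))
      hvw hy hyw
  have hUw : Convex ℝ (U ∩ (· + w) ⁻¹' U) := hU.inter (hU.translate_preimage_left w)
  have key := hUw.eq_of_hasFDerivAt_apply_eq_zero
    (G := fun y => f (y + w) - f y) (G' := fun y => fderiv ℝ f (y + w) - fderiv ℝ f y)
    (fun y hy => ((hf' _ hy.2).comp y ((hasFDerivAt_id y).add_const w)).sub (hf' y hy.1))
    (fun y hy => sub_eq_zero.2 (hshift y hy.1 hy.2)) ⟨hx, hxw⟩ ⟨hxv, hxvw⟩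
  rw [add_comm (f x), add_comm (f (x + v))]
  exact sub_eq_sub_iff_add_eq_add.1 key

theorem fderiv_fderiv_apply_eq_of_hasDerivAt_comp {f : E → F} {γ : ℝ → E} {v : E} {g : ℝ → F}
    {g' : F} {τ₀ : ℝ} (hf : ContDiffAt ℝ 2 f (γ τ₀)) (hγ : ∀ τ, HasDerivAt γ v τ)
    (hg : ∀ᶠ τ in 𝓝 τ₀, HasDerivAt (f ∘ γ) (g τ) τ) (hg' : HasDerivAt g g' τ₀) :
    fderiv ℝ (fderiv ℝ f) (γ τ₀) v v = g' := by
  have hdiff : ∀ᶠ τ in 𝓝 τ₀, DifferentiableAt ℝ f (γ τ) :=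
    (hγ τ₀).continuousAt.tendsto.eventually
      ((hf.eventually (by simp)).mono fun _ hy => hy.differentiableAt two_ne_zero)
  have hg_eq : g =ᶠ[𝓝 τ₀] fun τ => fderiv ℝ f (γ τ) v := by
    filter_upwards [hdiff, hg] with τ hτ hgτ
    exact hgτ.unique (hτ.hasFDerivAt.comp_hasDerivAt τ (hγ τ))
  have hf' : HasFDerivAt (fderiv ℝ f) (fderiv ℝ (fderiv ℝ f) (γ τ₀)) (γ τ₀) :=
    ((hf.fderiv_right (m := 1) le_rfl).differentiableAt one_ne_zero).hasFDerivAt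
  have hgv : HasDerivAt (fun τ => fderiv ℝ f (γ τ) v) (fderiv ℝ (fderiv ℝ f) (γ τ₀) v v) τ₀ :=
    (ContinuousLinearMap.apply ℝ F v).hasFDerivAt.comp_hasDerivAt τ₀
      (hf'.comp_hasDerivAt τ₀ (hγ τ₀))
  exact (hgv.congr_of_eventuallyEq hg_eq).unique hg'

theorem fderiv_fderiv_apply_eq_zero_of_wave {f : ℝ × ℝ → F} {p : ℝ × ℝ} (hf : ContDiffAt ℝ 2 f p)
    (hwave : fderiv ℝ (fderiv ℝ f) p (0, 1) (0, 1) = fderiv ℝ (fderiv ℝ f) p (1, 0) (1, 0))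
    (a : ℝ) : fderiv ℝ (fderiv ℝ f) p (a, -a) (a, a) = 0 := by
  have hsym := hf.isSymmSndFDerivAt (by simp [minSmoothness_of_isRCLikeNormedField]) (1, 0) (0, 1)
  have h₁ : ((a, -a) : ℝ × ℝ) = a • ((1, 0) - (0, 1)) := by simp
  have h₂ : ((a, a) : ℝ × ℝ) = a • ((1, 0) + (0, 1)) := by simp
  simp only [h₁, h₂, map_smul, map_sub, map_add, smul_apply, sub_apply, hsym, hwave]
  module

theorem add_eq_add_of_fderiv_fderiv_eq_zero_halfPlane {f : ℝ × ℝ → F}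
    (hf : ContDiffOn ℝ 2 f {p | p.1 + p.2 ≤ 0}) {a : ℝ} (ha : a ≤ 0)
    (hmixed : ∀ p : ℝ × ℝ, p.1 + p.2 < 0 → fderiv ℝ (fderiv ℝ f) p (a, -a) (a, a) = 0) :
    f (0, 0) + f (2 * a, 0) = f (a, a) + f (a, -a) := by
  have hUo : IsOpen {p : ℝ × ℝ | p.1 + p.2 < 0} :=
    isOpen_lt (continuous_fst.add continuous_snd) continuous_const
  have hU : Convex ℝ {p : ℝ × ℝ | p.1 + p.2 < 0} :=
    convex_halfSpace_lt (LinearMap.fst ℝ ℝ ℝ + LinearMap.snd ℝ ℝ ℝ).isLinear 0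
  -- Shifted by `(-ε, 0)`, the parallelogram lies in the open half-plane, where `f` is `C²` at
  -- every point; the corners on the boundary are then reached by continuity.
  have hinterior : ∀ ε > 0, f (-ε, 0) + f (2 * a - ε, 0) = f (a - ε, a) + f (a - ε, -a) := by
    intro ε hε
    have key := hU.add_eq_add_of_fderiv_fderiv_apply_eq_zero hUo
      (hf.mono fun p (hp : p.1 + p.2 < 0) => hp.le) (v := (a, a)) (w := (a, -a)) hmixed
      (x := (-ε, 0))
      (by simp; linarith) (by simp; linarith) (by simp; linarith) (by simp; linarith)
    simp only [Prod.mk_add_mk, zero_add, add_neg_cancel] at key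
    rwa [show -ε + a + a = 2 * a - ε by ring, show -ε + a = a - ε by ring] at key
  have hboundary : ∀ p : ℝ × ℝ, p.1 + p.2 ≤ 0 →
      Tendsto (fun ε : ℝ => f (p.1 - ε, p.2)) (𝓝[>] 0) (𝓝 (f p)) := by
    intro p hp
    have hshift : Tendsto (fun ε : ℝ => (p.1 - ε, p.2)) (𝓝[>] 0) (𝓝[{p | p.1 + p.2 ≤ 0}] p) := by
      refine tendsto_nhdsWithin_iff.2 ⟨?_, ?_⟩
      · exact ((by fun_prop : Continuous fun ε : ℝ => (p.1 - ε, p.2)).tendsto' 0 p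
          (by simp)).mono_left nhdsWithin_le_nhds
      · filter_upwards [self_mem_nhdsWithin] with ε (hε : 0 < ε)
        show p.1 - ε + p.2 ≤ 0
        linarith
    exact (hf.continuousOn p hp).tendsto.comp hshift
  refine tendsto_nhds_unique
    ((hboundary (0, 0) (by norm_num)).add (hboundary (2 * a, 0) (show 2 * a + 0 ≤ 0 by linarith)))
    (((hboundary (a, a) (show a + a ≤ 0 by linarith)).add
      (hboundary (a, -a) (show a + -a ≤ 0 by linarith))).congr' ?_)
  filter_upwards [self_mem_nhdsWithin] with ε hε
  simpa using (hinterior ε hε).symm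

end

theorem dalembert_halfplane_limits_general
    (b bt bs btt bss : ℝ → ℝ → ℝ) (A B : ℝ)
    (hC2 : ContDiffOn ℝ 2 (fun p : ℝ × ℝ => b p.1 p.2)
      {p : ℝ × ℝ | p.1 + p.2 ≤ 0})
    (hbt : ∀ s t : ℝ, s + t ≤ 0 → HasDerivAt (fun τ => b s τ) (bt s t) t)
    (hbtt : ∀ s t : ℝ, s + t ≤ 0 → HasDerivAt (fun τ => bt s τ) (btt s t) t)
    (hbs : ∀ s t : ℝ, s + t ≤ 0 → HasDerivAt (fun σ => b σ t) (bs s t) s)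
    (hbss : ∀ s t : ℝ, s + t ≤ 0 → HasDerivAt (fun σ => bs σ t) (bss s t) s)
    (hwave : ∀ s t : ℝ, s + t ≤ 0 → btt s t = bss s t)
    (hA : Tendsto (fun t => b t t) atBot (nhds A))
    (hB' : Tendsto (fun t => b t (-t)) atBot (nhds B))
    (h0 : Tendsto (fun s => b s 0) atBot (nhds 0)) :
    b 0 0 = A + B := by
  set f : ℝ × ℝ → ℝ := fun p => b p.1 p.2
  have hmixed : ∀ a : ℝ, ∀ p : ℝ × ℝ, p.1 + p.2 < 0 →
      fderiv ℝ (fderiv ℝ f) p (a, -a) (a, a) = 0 := by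
    rintro a ⟨s, t⟩ (hst : s + t < 0)
    have hf : ContDiffAt ℝ 2 f (s, t) := hC2.contDiffAt <| mem_of_superset
      ((isOpen_lt (continuous_fst.add continuous_snd) continuous_const).mem_nhds hst)
      fun p (hp : p.1 + p.2 < 0) => hp.le
    have htt : fderiv ℝ (fderiv ℝ f) (s, t) (0, 1) (0, 1) = btt s t :=
      fderiv_fderiv_apply_eq_of_hasDerivAt_comp (γ := fun τ => (s, τ)) hf
        (fun τ => (hasDerivAt_const τ s).prodMk (hasDerivAt_id τ))
        ((eventually_lt_nhds (show t < -s by linarith)).mono fun τ hτ => hbt s τ (by linarith))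
        (hbtt s t hst.le)
    have hss : fderiv ℝ (fderiv ℝ f) (s, t) (1, 0) (1, 0) = bss s t :=
      fderiv_fderiv_apply_eq_of_hasDerivAt_comp (γ := fun σ => (σ, t)) hf
        (fun σ => (hasDerivAt_id σ).prodMk (hasDerivAt_const σ t))
        ((eventually_lt_nhds (show s < -t by linarith)).mono fun σ hσ => hbs σ t (by linarith))
        (hbss s t hst.le)
    exact fderiv_fderiv_apply_eq_zero_of_wave hf (by rw [htt, hss, hwave s t hst.le]) a
  have hparallelogram : ∀ a : ℝ, a < 0 → b 0 0 + b (2 * a) 0 = b a a + b a (-a) :=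
    fun a ha => add_eq_add_of_fderiv_fderiv_eq_zero_halfPlane hC2 ha.le (hmixed a)
  have hleft : Tendsto (fun a => b 0 0 + b (2 * a) 0) atBot (𝓝 (b 0 0 + 0)) :=
    tendsto_const_nhds.add (h0.comp (tendsto_id.const_mul_atBot two_pos))
  refine (add_zero (b 0 0)).symm.trans (tendsto_nhds_unique (hleft.congr' ?_) (hA.add hB'))
  filter_upwards [eventually_lt_atBot 0] with a ha
  exact hparallelogram a ha

/-- D'Alembert decomposition on the half-plane `s + t ≤ 0`: if `b_tt = b_ss`
and the diagonal/antidiagonal limits are `A`, `B`, `B`, `0`, then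
`b(0,0) = A + B`. -/
theorem dalembert_halfplane_limits
    (b bt bs btt bss : ℝ → ℝ → ℝ) (A B : ℝ)
    (hC2 : ContDiffOn ℝ 2 (fun p : ℝ × ℝ => b p.1 p.2)
      {p : ℝ × ℝ | p.1 + p.2 ≤ 0})
    (hbt : ∀ s t : ℝ, s + t ≤ 0 → HasDerivAt (fun τ => b s τ) (bt s t) t)
    (hbtt : ∀ s t : ℝ, s + t ≤ 0 → HasDerivAt (fun τ => bt s τ) (btt s t) t)
    (hbs : ∀ s t : ℝ, s + t ≤ 0 → HasDerivAt (fun σ => b σ t) (bs s t) s)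
    (hbss : ∀ s t : ℝ, s + t ≤ 0 → HasDerivAt (fun σ => bs σ t) (bss s t) s)
    (hwave : ∀ s t : ℝ, s + t ≤ 0 → btt s t = bss s t)
    (hA : Tendsto (fun t => b t t) atBot (nhds A))
    (hB : Tendsto (fun t => b (-t) t) atBot (nhds B))
    (hB' : Tendsto (fun t => b t (-t)) atBot (nhds B))
    (h0 : Tendsto (fun s => b s 0) atBot (nhds 0)) :
    b 0 0 = A + B :=
  dalembert_halfplane_limits_general b bt bs btt bss A B hC2 hbt hbtt hbs hbss hwave hA hB' h0
end
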